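/- arXiv:1911.11347 — 2 statements merged into one kernel-verified Lean document; each statement's English description precedes it below -/
import Mathlib

section
/- Let A be a real n×n matrix, B a real n×p matrix, u : ℝ → ℝᵖ, and let ξ, ξ̃ : ℝ → ℝⁿ be differentiable functions satisfying ξ'(t) = Aξ(t) + Bu(t) and ξ̃'(t) = Aξ̃(t) + Bu(t) for all t. Let M be a real symmetric positive definite n×n matrix and μ ∈ ℝ with AᵀM + MA + μM ⪯ 0. If (ξ(0) − ξ̃(0))ᵀ M (ξ(0) − ξ̃(0)) ≤ r for some r ≥ 0, then for all t ≥ 0: (ξ(t) − ξ̃(t))ᵀ M (ξ(t) − ξ̃(t)) ≤ r e^{−μt}. In other words, if the initial state ξ̃(0) lies in the ellipsoid B_M(ξ(0), r) = {x : (x − ξ(0))ᵀM(x − ξ(0)) ≤ r}, then ξ̃(t) ∈ B_M(ξ(t), r e^{−μt}) for all t ≥ 0. -/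
open Matrix

/-! Since ξ and η are driven by the same input, δ = ξ - η solves δ' = A δ. Along it the
quadratic form V = δᵀ M δ has derivative δᵀ (AᵀM + MA) δ ≤ -μ V by the LMI, so
V(t) e^{μt} is nonincreasing. -/

section

variable {𝕜 : Type*} [NontriviallyNormedField 𝕜] {ι : Type*} [Fintype ι]
  {f g : 𝕜 → ι → 𝕜} {f' g' : ι → 𝕜} {t : 𝕜}

theorem HasDerivAt.dotProduct (hf : HasDerivAt f f' t) (hg : HasDerivAt g g' t) :
    HasDerivAt (fun s => f s ⬝ᵥ g s) (f' ⬝ᵥ g t + f t ⬝ᵥ g') t := by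
  have := HasDerivAt.fun_sum (u := Finset.univ) fun i _ =>
    (hasDerivAt_pi.mp hf i).mul (hasDerivAt_pi.mp hg i)
  rwa [Finset.sum_add_distrib] at this

theorem HasDerivAt.mulVec (M : Matrix ι ι 𝕜) (hf : HasDerivAt f f' t) :
    HasDerivAt (fun s => M *ᵥ f s) (M *ᵥ f') t :=
  hasDerivAt_pi.2 fun i =>
    HasDerivAt.fun_sum fun j _ => (hasDerivAt_pi.1 hf j).const_mul (M i j)

theorem HasDerivAt.dotProduct_mulVec_self (M : Matrix ι ι 𝕜) (hf : HasDerivAt f f' t) :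
    HasDerivAt (fun s => f s ⬝ᵥ M *ᵥ f s) (f' ⬝ᵥ M *ᵥ f t + f t ⬝ᵥ M *ᵥ f') t :=
  hf.dotProduct (hf.mulVec M)

end

theorem Matrix.dotProduct_lyapunov_mulVec {ι R : Type*} [Fintype ι] [CommRing R]
    (A M : Matrix ι ι R) (μ : R) (v : ι → R) :
    v ⬝ᵥ (Aᵀ * M + M * A + μ • M) *ᵥ v
      = A *ᵥ v ⬝ᵥ M *ᵥ v + v ⬝ᵥ M *ᵥ (A *ᵥ v) + μ * (v ⬝ᵥ M *ᵥ v) := by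
  simp only [add_mulVec, ← mulVec_mulVec, smul_mulVec, dotProduct_add, dotProduct_smul,
    smul_eq_mul, dotProduct_mulVec v Aᵀ, vecMul_transpose]

theorem le_mul_exp_neg_of_hasDerivAt {V V' : ℝ → ℝ} {μ : ℝ} (hV : ∀ s, HasDerivAt V (V' s) s)
    (hV' : ∀ s, V' s + μ * V s ≤ 0) {t : ℝ} (ht : 0 ≤ t) :
    V t ≤ V 0 * Real.exp (-μ * t) := by
  have hW : ∀ s, HasDerivAt (fun s => V s * Real.exp (μ * s))
      ((V' s + μ * V s) * Real.exp (μ * s)) s := fun s =>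
    ((hV s).fun_mul ((hasDerivAt_id' s).const_mul μ).exp).congr_deriv (by ring)
  have hanti : Antitone fun s => V s * Real.exp (μ * s) :=
    antitone_of_deriv_nonpos (fun s => (hW s).differentiableAt) fun s => by
      rw [(hW s).deriv]
      exact mul_nonpos_of_nonpos_of_nonneg (hV' s) (Real.exp_pos _).le
  calc V t = V t * Real.exp (μ * t) * Real.exp (-μ * t) := by
        rw [mul_assoc, ← Real.exp_add, neg_mul, add_neg_cancel, Real.exp_zero, mul_one]
    _ ≤ V 0 * Real.exp (-μ * t) := by
        gcongr
        simpa using hanti ht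

theorem stmt_4_general {n p : ℕ} (A : Matrix (Fin n) (Fin n) ℝ) (B : Matrix (Fin n) (Fin p) ℝ)
    (u : ℝ → Fin p → ℝ) (ξ η : ℝ → Fin n → ℝ)
    (hξ : ∀ t : ℝ, HasDerivAt ξ (A.mulVec (ξ t) + B.mulVec (u t)) t)
    (hη : ∀ t : ℝ, HasDerivAt η (A.mulVec (η t) + B.mulVec (u t)) t)
    (M : Matrix (Fin n) (Fin n) ℝ) (μ : ℝ)
    (hLMI : ∀ v : Fin n → ℝ, v ⬝ᵥ (Aᵀ * M + M * A + μ • M).mulVec v ≤ 0)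
    (r : ℝ)
    (h0 : (ξ 0 - η 0) ⬝ᵥ M.mulVec (ξ 0 - η 0) ≤ r) :
    ∀ t : ℝ, 0 ≤ t →
      (ξ t - η t) ⬝ᵥ M.mulVec (ξ t - η t) ≤ r * Real.exp (-μ * t) := by
  intro t ht
  have hδ : ∀ s, HasDerivAt (ξ - η) (A *ᵥ (ξ s - η s)) s := fun s =>
    ((hξ s).sub (hη s)).congr_deriv (by rw [mulVec_sub]; abel)
  calc (ξ t - η t) ⬝ᵥ M *ᵥ (ξ t - η t)
      ≤ (ξ 0 - η 0) ⬝ᵥ M *ᵥ (ξ 0 - η 0) * Real.exp (-μ * t) :=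
        le_mul_exp_neg_of_hasDerivAt (fun s => (hδ s).dotProduct_mulVec_self M)
          (fun s => by
            simpa only [Pi.sub_apply, dotProduct_lyapunov_mulVec] using hLMI (ξ s - η s)) ht
    _ ≤ r * Real.exp (-μ * t) := by gcongr

/-- If the initial deviation lies in the ellipsoid of radius r, i.e.
(ξ(0) − η(0))ᵀ M (ξ(0) − η(0)) ≤ r, then for all t ≥ 0 we have
(ξ(t) − η(t))ᵀ M (ξ(t) − η(t)) ≤ r e^{−μt}. -/
theorem stmt_4 {n p : ℕ} (A : Matrix (Fin n) (Fin n) ℝ) (B : Matrix (Fin n) (Fin p) ℝ)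
    (u : ℝ → Fin p → ℝ) (ξ η : ℝ → Fin n → ℝ)
    (hξ : ∀ t : ℝ, HasDerivAt ξ (A.mulVec (ξ t) + B.mulVec (u t)) t)
    (hη : ∀ t : ℝ, HasDerivAt η (A.mulVec (η t) + B.mulVec (u t)) t)
    (M : Matrix (Fin n) (Fin n) ℝ) (hMsym : M = Mᵀ)
    (hMpd : ∀ v : Fin n → ℝ, v ≠ 0 → 0 < v ⬝ᵥ M.mulVec v) (μ : ℝ)
    (hLMI : ∀ v : Fin n → ℝ, v ⬝ᵥ (Aᵀ * M + M * A + μ • M).mulVec v ≤ 0)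
    (r : ℝ) (hr : 0 ≤ r)
    (h0 : (ξ 0 - η 0) ⬝ᵥ M.mulVec (ξ 0 - η 0) ≤ r) :
    ∀ t : ℝ, 0 ≤ t →
      (ξ t - η t) ⬝ᵥ M.mulVec (ξ t - η t) ≤ r * Real.exp (-μ * t) :=
  stmt_4_general A B u ξ η hξ hη M μ hLMI r h0
end

section
/- (Deterministic mode-switching propagation in Theorem 1.) Let A₀, A₁ be real n×n matrices, B₀, B₁ real n×p matrices, u : ℝ → ℝᵖ, and let T₀ > 0 and T ≥ T₀. Let ξ, ξ̃ : ℝ → ℝⁿ be continuous functions that are differentiable on [0, T₀] with ξ'(t) = A₀ξ(t) + B₀u(t) and ξ̃'(t) = A₀ξ̃(t) + B₀u(t) there, and differentiable on [T₀, T] with ξ'(t) = A₁ξ(t) + B₁u(t) and ξ̃'(t) = A₁ξ̃(t) + B₁u(t) there. Let M₀, M₁ be real symmetric positive definite n×n matrices and μ₀, μ₁ ∈ ℝ with A₀ᵀM₀ + M₀A₀ + μ₀M₀ ⪯ 0 and A₁ᵀM₁ + M₁A₁ + μ₁M₁ ⪯ 0. Suppose (ξ(0) − ξ̃(0))ᵀ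 M₀ (ξ(0) − ξ̃(0)) ≤ r₀ and that the ellipsoid containment ∀ v ∈ ℝⁿ, vᵀM₀v ≤ r₀ e^{−μ₀T₀} ⟹ vᵀM₁v ≤ r₁ holds. Then for all t ∈ [0, T₀]: (ξ(t) − ξ̃(t))ᵀ M₀ (ξ(t) − ξ̃(t)) ≤ r₀ e^{−μ₀ t}, and for all t ∈ [T₀, T]: (ξ(t) − ξ̃(t))ᵀ M₁ (ξ(t) − ξ̃(t)) ≤ r₁ e^{−μ₁ (t − T₀)}. -/
/-!
The difference `ξ - η` of two trajectories driven by the same input solves the homogeneous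
equation `x' = A x` of the current mode. Along it, `V = xᵀ M x` has
`V' = xᵀ (Aᵀ M + M A) x ≤ -μ V`, so `exp (μ (t - a)) V` is nonincreasing, which is the
exponential decay on each interval. At the switching time `T₀` the containment hypothesis turns
the `M₀`-bound reached there into the initial `M₁`-bound of the second mode.
-/

open Matrix Set

variable {ι : Type*} [Fintype ι]

theorem HasDerivWithinAt.dotProduct {u v : ℝ → ι → ℝ} {u' v' : ι → ℝ} {s : Set ℝ} {t : ℝ}
    (hu : HasDerivWithinAt u u' s t) (hv : HasDerivWithinAt v v' s t) :
    HasDerivWithinAt (fun τ => u τ ⬝ᵥ v τ) (u' ⬝ᵥ v t + u t ⬝ᵥ v') s t := by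
  simp only [_root_.dotProduct, ← Finset.sum_add_distrib]
  exact .fun_sum fun i _ => (hasDerivWithinAt_pi.1 hu i).mul (hasDerivWithinAt_pi.1 hv i)

theorem HasDerivWithinAt.mulVec (M : Matrix ι ι ℝ) {x : ℝ → ι → ℝ} {x' : ι → ℝ}
    {s : Set ℝ} {t : ℝ} (hx : HasDerivWithinAt x x' s t) :
    HasDerivWithinAt (fun τ => M *ᵥ x τ) (M *ᵥ x') s t :=
  M.mulVecLin.toContinuousLinearMap.hasFDerivAt.comp_hasDerivWithinAt t hx

theorem HasDerivWithinAt.sub_of_mulVec_add {A : Matrix ι ι ℝ} {w : ι → ℝ} {ξ η : ℝ → ι → ℝ}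
    {s : Set ℝ} {t : ℝ} (hξ : HasDerivWithinAt ξ (A *ᵥ ξ t + w) s t)
    (hη : HasDerivWithinAt η (A *ᵥ η t + w) s t) :
    HasDerivWithinAt (fun τ => ξ τ - η τ) (A *ᵥ (ξ t - η t)) s t := by
  simpa only [mulVec_sub, add_sub_add_right_eq_sub] using hξ.fun_sub hη

theorem dotProduct_transpose_mul_add_mul_mulVec (A M : Matrix ι ι ℝ) (v : ι → ℝ) :
    v ⬝ᵥ (Aᵀ * M + M * A) *ᵥ v = A *ᵥ v ⬝ᵥ M *ᵥ v + v ⬝ᵥ M *ᵥ (A *ᵥ v) := by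
  rw [add_mulVec, dotProduct_add, ← mulVec_mulVec, ← mulVec_mulVec, dotProduct_mulVec,
    vecMul_transpose]

theorem le_mul_exp_of_hasDerivWithinAt_le {f f' : ℝ → ℝ} {a b μ : ℝ}
    (hf : ∀ t ∈ Icc a b, HasDerivWithinAt f (f' t) (Icc a b) t)
    (hf' : ∀ t ∈ Icc a b, f' t ≤ -μ * f t) :
    ∀ t ∈ Icc a b, f t ≤ f a * Real.exp (-μ * (t - a)) := by
  set e : ℝ → ℝ := fun t => Real.exp (μ * (t - a))
  have he : ∀ t, HasDerivAt e (e t * μ) t := fun t => by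
    simpa using ((hasDerivAt_id t).sub_const a).const_mul μ |>.exp
  have hanti : AntitoneOn (fun t => e t * f t) (Icc a b) := by
    refine antitoneOn_of_hasDerivWithinAt_nonpos (convex_Icc a b)
      (fun t ht => (he t).continuousAt.continuousWithinAt.mul (hf t ht).continuousWithinAt)
      (fun t ht => ?_) (fun t ht => ?_) (f' := fun t => e t * μ * f t + e t * f' t)
    · rw [interior_Icc] at ht ⊢
      exact (he t).hasDerivWithinAt.mul ((hf t (Ioo_subset_Icc_self ht)).mono Ioo_subset_Icc_self)
    · rw [interior_Icc] at ht
      have hf't := hf' t (Ioo_subset_Icc_self ht)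
      have he_nonneg := (Real.exp_pos (μ * (t - a))).le
      nlinarith
  intro t ht
  have hdecay : e t * f t ≤ f a := by
    simpa [e] using hanti (left_mem_Icc.2 (ht.1.trans ht.2)) ht ht.1
  calc f t = Real.exp (-μ * (t - a)) * (e t * f t) := by
        rw [← mul_assoc, ← Real.exp_add]; simp
    _ ≤ Real.exp (-μ * (t - a)) * f a := by gcongr
    _ = f a * Real.exp (-μ * (t - a)) := mul_comm _ _

theorem dotProduct_mulVec_le_mul_exp_of_lyapunov {A M : Matrix ι ι ℝ} {μ a b : ℝ}
    (hLMI : ∀ v, v ⬝ᵥ (Aᵀ * M + M * A + μ • M) *ᵥ v ≤ 0) {x : ℝ → ι → ℝ}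
    (hx : ∀ t ∈ Icc a b, HasDerivWithinAt x (A *ᵥ x t) (Icc a b) t) :
    ∀ t ∈ Icc a b, x t ⬝ᵥ M *ᵥ x t ≤ (x a ⬝ᵥ M *ᵥ x a) * Real.exp (-μ * (t - a)) :=
  le_mul_exp_of_hasDerivWithinAt_le (fun t ht => (hx t ht).dotProduct ((hx t ht).mulVec M))
    fun t _ => by
      have hV := hLMI (x t)
      rw [add_mulVec, dotProduct_add, dotProduct_transpose_mul_add_mul_mulVec, smul_mulVec,
        dotProduct_smul, smul_eq_mul] at hV
      linarith

theorem stmt_10_general {n p : ℕ} (A₀ A₁ : Matrix (Fin n) (Fin n) ℝ)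
    (B₀ B₁ : Matrix (Fin n) (Fin p) ℝ) (u : ℝ → Fin p → ℝ)
    (T₀ T : ℝ) (hT₀ : 0 < T₀)
    (ξ η : ℝ → Fin n → ℝ)
    (hξ0 : ∀ t ∈ Set.Icc (0 : ℝ) T₀,
      HasDerivWithinAt ξ (A₀.mulVec (ξ t) + B₀.mulVec (u t)) (Set.Icc (0 : ℝ) T₀) t)
    (hη0 : ∀ t ∈ Set.Icc (0 : ℝ) T₀,
      HasDerivWithinAt η (A₀.mulVec (η t) + B₀.mulVec (u t)) (Set.Icc (0 : ℝ) T₀) t)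
    (hξ1 : ∀ t ∈ Set.Icc T₀ T,
      HasDerivWithinAt ξ (A₁.mulVec (ξ t) + B₁.mulVec (u t)) (Set.Icc T₀ T) t)
    (hη1 : ∀ t ∈ Set.Icc T₀ T,
      HasDerivWithinAt η (A₁.mulVec (η t) + B₁.mulVec (u t)) (Set.Icc T₀ T) t)
    (M₀ M₁ : Matrix (Fin n) (Fin n) ℝ)
    (μ₀ μ₁ : ℝ)
    (hLMI₀ : ∀ v : Fin n → ℝ, v ⬝ᵥ (A₀ᵀ * M₀ + M₀ * A₀ + μ₀ • M₀).mulVec v ≤ 0)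
    (hLMI₁ : ∀ v : Fin n → ℝ, v ⬝ᵥ (A₁ᵀ * M₁ + M₁ * A₁ + μ₁ • M₁).mulVec v ≤ 0)
    (r₀ r₁ : ℝ)
    (h0 : (ξ 0 - η 0) ⬝ᵥ M₀.mulVec (ξ 0 - η 0) ≤ r₀)
    (hcontain : ∀ v : Fin n → ℝ,
      v ⬝ᵥ M₀.mulVec v ≤ r₀ * Real.exp (-μ₀ * T₀) → v ⬝ᵥ M₁.mulVec v ≤ r₁) :
    (∀ t ∈ Set.Icc (0 : ℝ) T₀,
      (ξ t - η t) ⬝ᵥ M₀.mulVec (ξ t - η t) ≤ r₀ * Real.exp (-μ₀ * t)) ∧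
    (∀ t ∈ Set.Icc T₀ T,
      (ξ t - η t) ⬝ᵥ M₁.mulVec (ξ t - η t) ≤ r₁ * Real.exp (-μ₁ * (t - T₀))) := by
  have mode₀ : ∀ t ∈ Icc 0 T₀,
      (ξ t - η t) ⬝ᵥ M₀ *ᵥ (ξ t - η t) ≤ r₀ * Real.exp (-μ₀ * t) := fun t ht => by
    have decay := dotProduct_mulVec_le_mul_exp_of_lyapunov hLMI₀
      (fun t ht => (hξ0 t ht).sub_of_mulVec_add (hη0 t ht)) t ht
    rw [sub_zero] at decay
    exact decay.trans (by gcongr)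
  have switch : (ξ T₀ - η T₀) ⬝ᵥ M₁ *ᵥ (ξ T₀ - η T₀) ≤ r₁ :=
    hcontain _ (mode₀ T₀ (right_mem_Icc.2 hT₀.le))
  exact ⟨mode₀, fun t ht => (dotProduct_mulVec_le_mul_exp_of_lyapunov hLMI₁
    (fun t ht => (hξ1 t ht).sub_of_mulVec_add (hη1 t ht)) t ht).trans (by gcongr)⟩

/-- Deterministic mode-switching propagation in Theorem 1: the ellipsoid bound decays in the
first mode on [0, T₀], and after the mode switch (with the ellipsoid containment condition)
it decays in the second mode on [T₀, T]. -/
theorem stmt_10 {n p : ℕ} (A₀ A₁ : Matrix (Fin n) (Fin n) ℝ)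
    (B₀ B₁ : Matrix (Fin n) (Fin p) ℝ) (u : ℝ → Fin p → ℝ)
    (T₀ T : ℝ) (hT₀ : 0 < T₀) (hT : T₀ ≤ T)
    (ξ η : ℝ → Fin n → ℝ) (hξc : Continuous ξ) (hηc : Continuous η)
    (hξ0 : ∀ t ∈ Set.Icc (0 : ℝ) T₀,
      HasDerivWithinAt ξ (A₀.mulVec (ξ t) + B₀.mulVec (u t)) (Set.Icc (0 : ℝ) T₀) t)
    (hη0 : ∀ t ∈ Set.Icc (0 : ℝ) T₀,
      HasDerivWithinAt η (A₀.mulVec (η t) + B₀.mulVec (u t)) (Set.Icc (0 : ℝ) T₀) t)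
    (hξ1 : ∀ t ∈ Set.Icc T₀ T,
      HasDerivWithinAt ξ (A₁.mulVec (ξ t) + B₁.mulVec (u t)) (Set.Icc T₀ T) t)
    (hη1 : ∀ t ∈ Set.Icc T₀ T,
      HasDerivWithinAt η (A₁.mulVec (η t) + B₁.mulVec (u t)) (Set.Icc T₀ T) t)
    (M₀ M₁ : Matrix (Fin n) (Fin n) ℝ)
    (hM₀sym : M₀ = M₀ᵀ) (hM₁sym : M₁ = M₁ᵀ)
    (hM₀pd : ∀ v : Fin n → ℝ, v ≠ 0 → 0 < v ⬝ᵥ M₀.mulVec v)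
    (hM₁pd : ∀ v : Fin n → ℝ, v ≠ 0 → 0 < v ⬝ᵥ M₁.mulVec v)
    (μ₀ μ₁ : ℝ)
    (hLMI₀ : ∀ v : Fin n → ℝ, v ⬝ᵥ (A₀ᵀ * M₀ + M₀ * A₀ + μ₀ • M₀).mulVec v ≤ 0)
    (hLMI₁ : ∀ v : Fin n → ℝ, v ⬝ᵥ (A₁ᵀ * M₁ + M₁ * A₁ + μ₁ • M₁).mulVec v ≤ 0)
    (r₀ r₁ : ℝ)
    (h0 : (ξ 0 - η 0) ⬝ᵥ M₀.mulVec (ξ 0 - η 0) ≤ r₀)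
    (hcontain : ∀ v : Fin n → ℝ,
      v ⬝ᵥ M₀.mulVec v ≤ r₀ * Real.exp (-μ₀ * T₀) → v ⬝ᵥ M₁.mulVec v ≤ r₁) :
    (∀ t ∈ Set.Icc (0 : ℝ) T₀,
      (ξ t - η t) ⬝ᵥ M₀.mulVec (ξ t - η t) ≤ r₀ * Real.exp (-μ₀ * t)) ∧
    (∀ t ∈ Set.Icc T₀ T,
      (ξ t - η t) ⬝ᵥ M₁.mulVec (ξ t - η t) ≤ r₁ * Real.exp (-μ₁ * (t - T₀))) :=
  stmt_10_general A₀ A₁ B₀ B₁ u T₀ T hT₀ ξ η hξ0 hη0 hξ1 hη1 M₀ M₁ μ₀ μ₁ hLMI₀ hLMI₁ r₀ r₁ h0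
    hcontain
end
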